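/- Let α > 0, β ∈ (0,1] and γ > 0. There exists C > 0 such that for every x ∈ 𝔇_α and every K ≥ 2/α: ‖ h^K_{β,γ}(x) − J_{F_{β,γ}}(x) b(x) − Δ^K_{β,γ}(x) ‖₂ ≤ (C/K) · ‖x‖₂^{β−1}. -/

import Mathlib

open Real Set

/-- The jump compensator `h^K_{β,γ}` of the transformed scaled birth–death
process. -/
noncomputable def hKbd (lam₁ lam₂ mu₁ mu₂ a b c d β γ K : ℝ) (x : ℝ × ℝ) : ℝ × ℝ :=
  (lam₁ * K * x.1 * ((x.1 + 1 / K) ^ β - x.1 ^ β)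
      + K * x.1 * (mu₁ + a * x.1 + c * x.2) * ((x.1 - 1 / K) ^ β - x.1 ^ β),
   γ * lam₂ * K * x.2 * ((x.2 + 1 / K) ^ β - x.2 ^ β)
      + γ * K * x.2 * (mu₂ + b * x.2 + d * x.1) * ((x.2 - 1 / K) ^ β - x.2 ^ β))

/-- The limiting drift `J_{F_{β,γ}}(x) b(x)` (with `τᵢ = λᵢ − μᵢ`). -/
noncomputable def JFb (lam₁ lam₂ mu₁ mu₂ a b c d β γ : ℝ) (x : ℝ × ℝ) : ℝ × ℝ :=
  (β * x.1 ^ (β - 1) * (x.1 * ((lam₁ - mu₁) - a * x.1 - c * x.2)),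
   γ * (β * x.2 ^ (β - 1) * (x.2 * ((lam₂ - mu₂) - b * x.2 - d * x.1))))

/-- The second-order correction `Δ^K_{β,γ}`. -/
noncomputable def DeltaK (a b c d β γ K : ℝ) (x : ℝ × ℝ) : ℝ × ℝ :=
  (β * (β - 1) / (2 * K) * ((a * x.1 + c * x.2) * x.1 ^ (β - 1)),
   β * (β - 1) / (2 * K) * (γ * (b * x.2 + d * x.1) * x.2 ^ (β - 1)))

/-- The cone-like domain `𝔇_α = { x ∈ (α,∞)² : x₁ ≥ α x₂, x₂ ≥ α x₁ }`. -/
def Dfrak (α : ℝ) : Set (ℝ × ℝ) :=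
  {x | α < x.1 ∧ α < x.2 ∧ α * x.2 ≤ x.1 ∧ α * x.1 ≤ x.2}

/-- Euclidean norm on `ℝ²`. -/
noncomputable def nrm2 (u : ℝ × ℝ) : ℝ := Real.sqrt (u.1 ^ 2 + u.2 ^ 2)

/-! Each coordinate of the error is a one-dimensional quantity
`K x (λ ((x + 1/K)^β - x^β) + q ((x - 1/K)^β - x^β))` with `q = μ + a x + c y`.
Expanding `t ↦ (x + t)^β` to second order at `t = ±1/K` (three applications of the mean value
theorem, valid since `1/K ≤ x/2` on `𝔇_α` when `K ≥ 2/α`), the first-order terms give the drift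
`J_F b`, the second-order terms give `Δ^K` plus `β(β-1)(λ+μ) x^(β-1)/(2K)`, and the remainder is
`O(K x (λ + q) x^(β-3) / K³)`. On `𝔇_α` one has `y ≤ x/α`, so `q = O(x)` and everything is
`O(x^(β-1)/K)`. Finally both coordinates are comparable to `‖x‖` on `𝔇_α`, so that
`xᵢ^(β-1) ≤ (1 + 1/α) ‖x‖^(β-1)`. -/

lemma abs_le_mul_abs_pow_succ_of_hasDerivAt {F F' : ℝ → ℝ} {h M : ℝ} {n : ℕ} (hM : 0 ≤ M)
    (hF0 : F 0 = 0) (hF : ∀ t ∈ uIcc 0 h, HasDerivAt F (F' t) t)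
    (hF' : ∀ t ∈ uIcc 0 h, |F' t| ≤ M * |t| ^ n) :
    ∀ t ∈ uIcc 0 h, |F t| ≤ M * |t| ^ (n + 1) := by
  intro t ht
  have hsub : uIcc 0 t ⊆ uIcc 0 h := uIcc_subset_uIcc left_mem_uIcc ht
  have hmvt := (convex_uIcc (0 : ℝ) t).norm_image_sub_le_of_norm_hasDerivWithin_le
    (C := M * |t| ^ n) (fun s hs => (hF s (hsub hs)).hasDerivWithinAt)
    (fun s hs => (hF' s (hsub hs)).trans <| by
      have := abs_sub_left_of_mem_uIcc hs
      simp only [sub_zero] at this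
      gcongr)
    left_mem_uIcc right_mem_uIcc
  simpa [hF0, Real.norm_eq_abs, pow_succ, mul_assoc] using hmvt

lemma abs_rpow_add_sub_taylor_le {β x h : ℝ} (hβ0 : 0 ≤ β) (hβ1 : β ≤ 1) (hx : 0 < x)
    (hh : |h| ≤ x / 2) :
    |(x + h) ^ β - x ^ β - β * x ^ (β - 1) * h - β * (β - 1) / 2 * x ^ (β - 2) * h ^ 2|
      ≤ 16 * x ^ (β - 3) * |h| ^ 3 := by
  have hhalf : ∀ t ∈ uIcc 0 h, x / 2 ≤ x + t := fun t ht => by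
    have := abs_sub_left_of_mem_uIcc ht
    simp only [sub_zero] at this
    linarith [neg_abs_le t]
  have hpos : ∀ t ∈ uIcc 0 h, 0 < x + t := fun t ht => by linarith [hhalf t ht]
  have hderiv : ∀ p, ∀ t ∈ uIcc 0 h,
      HasDerivAt (fun s => (x + s) ^ p) (p * (x + t) ^ (p - 1)) t := fun p t ht => by
    simpa using ((hasDerivAt_id t).const_add x).rpow_const (p := p) (Or.inl (hpos t ht).ne')
  have hM : 0 ≤ 16 * x ^ (β - 3) := by positivity
  -- `16 ≥ |β - 2| * 2 ^ (3 - β)`, the second factor coming from `x + t ≥ x / 2`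
  have hthird : ∀ t ∈ uIcc 0 h, |(β - 2) * (x + t) ^ (β - 3)| ≤ 16 * x ^ (β - 3) * |t| ^ 0 := by
    intro t ht
    have hhalf_rpow : (x + t) ^ (β - 3) ≤ (x / 2) ^ (β - 3) :=
      rpow_le_rpow_of_nonpos (by positivity) (hhalf t ht) (by linarith)
    have htwo : (2 : ℝ) ^ (3 - β) ≤ 2 ^ (3 : ℝ) :=
      rpow_le_rpow_of_exponent_le (by norm_num) (by linarith)
    rw [div_rpow hx.le zero_le_two, div_eq_mul_inv, ← rpow_neg zero_le_two, neg_sub]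
      at hhalf_rpow
    norm_num at htwo
    rw [abs_mul, abs_of_nonpos (by linarith), abs_of_pos (rpow_pos_of_pos (hpos t ht) _)]
    nlinarith [rpow_pos_of_pos hx (β - 3), rpow_pos_of_pos (hpos t ht) (β - 3)]
  have hsecond := abs_le_mul_abs_pow_succ_of_hasDerivAt (n := 0) hM
    (F := fun t => (x + t) ^ (β - 2) - x ^ (β - 2)) (by simp)
    (fun t ht => by
      have := (hderiv (β - 2) t ht).sub_const (x ^ (β - 2))
      rwa [show β - 2 - 1 = β - 3 by ring] at this)
    hthird
  have hfirst := abs_le_mul_abs_pow_succ_of_hasDerivAt (n := 1) hM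
    (F := fun t => β * (x + t) ^ (β - 1) - β * x ^ (β - 1) - β * (β - 1) * x ^ (β - 2) * t)
    (F' := fun t => β * (β - 1) * ((x + t) ^ (β - 2) - x ^ (β - 2))) (by simp)
    (fun t ht => by
      refine ((((hderiv (β - 1) t ht).const_mul β).sub_const _).sub
        ((hasDerivAt_id t).const_mul (β * (β - 1) * x ^ (β - 2)))).congr_deriv ?_
      rw [show β - 1 - 1 = β - 2 by ring]; ring)
    (fun t ht => by
      have hβ : |β * (β - 1)| ≤ 1 := by
        rw [abs_le]; constructor <;> nlinarith
      rw [abs_mul]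
      simpa using mul_le_mul hβ (hsecond t ht) (abs_nonneg _) zero_le_one)
  have hzeroth := abs_le_mul_abs_pow_succ_of_hasDerivAt (n := 2) hM
    (F := fun t => (x + t) ^ β - x ^ β - β * x ^ (β - 1) * t
      - β * (β - 1) / 2 * x ^ (β - 2) * t ^ 2) (by simp)
    (fun t ht => by
      refine ((((hderiv β t ht).sub_const _).sub
        ((hasDerivAt_id t).const_mul (β * x ^ (β - 1)))).sub
        ((hasDerivAt_pow 2 t).const_mul (β * (β - 1) / 2 * x ^ (β - 2)))).congr_deriv ?_
      ring)
    hfirst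
  exact hzeroth h right_mem_uIcc

lemma abs_birth_death_expansion_le {β x K p q : ℝ} (hβ0 : 0 ≤ β) (hβ1 : β ≤ 1) (hx : 0 < x)
    (hK : 0 < K) (hKx : 2 ≤ K * x) :
    |p * K * x * ((x + 1 / K) ^ β - x ^ β) + q * K * x * ((x - 1 / K) ^ β - x ^ β)
        - β * x ^ β * (p - q) - β * (β - 1) / (2 * K) * ((p + q) * x ^ (β - 1))|
      ≤ 16 * (|p| + |q|) / K ^ 2 * x ^ (β - 2) := by
  have hstep : |1 / K| ≤ x / 2 := by
    rw [abs_of_pos (one_div_pos.mpr hK), div_le_div_iff₀ hK two_pos]; linarith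
  have hplus := abs_rpow_add_sub_taylor_le hβ0 hβ1 hx hstep
  have hminus := abs_rpow_add_sub_taylor_le hβ0 hβ1 hx (h := -(1 / K)) (by rwa [abs_neg])
  set e₁ := (x + 1 / K) ^ β - x ^ β - β * x ^ (β - 1) * (1 / K)
    - β * (β - 1) / 2 * x ^ (β - 2) * (1 / K) ^ 2
  set e₂ := (x + -(1 / K)) ^ β - x ^ β - β * x ^ (β - 1) * -(1 / K)
    - β * (β - 1) / 2 * x ^ (β - 2) * (-(1 / K)) ^ 2
  have hpow : x ^ β = x ^ (β - 2) * x * x := by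
    rw [← rpow_add_one hx.ne', ← rpow_add_one hx.ne']; ring_nf
  have hpow' : x ^ (β - 1) = x ^ (β - 2) * x := by
    rw [← rpow_add_one hx.ne']; ring_nf
  have hsplit : p * K * x * ((x + 1 / K) ^ β - x ^ β) + q * K * x * ((x - 1 / K) ^ β - x ^ β)
      - β * x ^ β * (p - q) - β * (β - 1) / (2 * K) * ((p + q) * x ^ (β - 1))
      = K * x * (p * e₁ + q * e₂) := by
    simp only [e₁, e₂, ← sub_eq_add_neg, hpow, hpow']
    field_simp
    ring
  have hpow'' : x ^ (β - 2) = x ^ (β - 3) * x := by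
    rw [← rpow_add_one hx.ne']; ring_nf
  rw [hsplit, abs_mul, abs_of_pos (by positivity)]
  calc K * x * |p * e₁ + q * e₂|
      ≤ K * x * ((|p| + |q|) * (16 * x ^ (β - 3) * |1 / K| ^ 3)) := by
        gcongr
        refine (abs_add_le _ _).trans ?_
        rw [abs_mul, abs_mul, add_mul]
        rw [abs_neg] at hminus
        gcongr
    _ = 16 * (|p| + |q|) / K ^ 2 * x ^ (β - 2) := by
        rw [hpow'', abs_of_pos (one_div_pos.mpr hK)]
        field_simp

noncomputable def compensatorDefect (lam mu a c β K x y : ℝ) : ℝ :=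
  lam * K * x * ((x + 1 / K) ^ β - x ^ β)
    + K * x * (mu + a * x + c * y) * ((x - 1 / K) ^ β - x ^ β)
    - β * x ^ (β - 1) * (x * ((lam - mu) - a * x - c * y))
    - β * (β - 1) / (2 * K) * ((a * x + c * y) * x ^ (β - 1))

lemma hKbd_sub_JFb_sub_DeltaK (lam₁ lam₂ mu₁ mu₂ a b c d β γ K : ℝ) (x : ℝ × ℝ) :
    hKbd lam₁ lam₂ mu₁ mu₂ a b c d β γ K x - JFb lam₁ lam₂ mu₁ mu₂ a b c d β γ x
        - DeltaK a b c d β γ K x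
      = (compensatorDefect lam₁ mu₁ a c β K x.1 x.2,
          γ * compensatorDefect lam₂ mu₂ b d β K x.2 x.1) := by
  ext
  · simp only [hKbd, JFb, DeltaK, compensatorDefect, Prod.fst_sub]
  · simp only [hKbd, JFb, DeltaK, compensatorDefect, Prod.snd_sub]; ring

lemma abs_compensatorDefect_le {lam mu a c β K α x y : ℝ} (hβ0 : 0 ≤ β) (hβ1 : β ≤ 1)
    (hα : 0 < α) (hx : α < x) (hy : 0 < y) (hyx : α * y ≤ x) (hαK : 2 ≤ α * K) :
    |compensatorDefect lam mu a c β K x y|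
      ≤ (9 * (|lam| + |mu|) + 8 * α * |a| + 8 * |c|) / K * x ^ (β - 1) := by
  have hx0 : 0 < x := hα.trans hx
  have hK : 0 < K := pos_of_mul_pos_right (by linarith) hα.le
  have hKx : 2 ≤ K * x := by nlinarith
  set q := mu + a * x + c * y
  -- `DeltaK` keeps only the competition part of the second-order term; the rest is itself
  -- of size `x ^ (β - 1) / K`
  have hsplit : compensatorDefect lam mu a c β K x y
      = (lam * K * x * ((x + 1 / K) ^ β - x ^ β) + q * K * x * ((x - 1 / K) ^ β - x ^ β)
          - β * x ^ β * (lam - q) - β * (β - 1) / (2 * K) * ((lam + q) * x ^ (β - 1)))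
        + β * (β - 1) / (2 * K) * ((lam + mu) * x ^ (β - 1)) := by
    rw [compensatorDefect, show x ^ β = x ^ (β - 1) * x by
      rw [← rpow_add_one hx0.ne']; ring_nf]
    ring
  have hq : |q| ≤ |mu| + |a| * x + |c| * y := by
    simpa only [abs_mul, abs_of_pos hx0, abs_of_pos hy] using abs_add_three mu (a * x) (c * y)
  have hexpansion : 16 * (|lam| + |q|) / K ^ 2 * x ^ (β - 2)
      ≤ (8 * (|lam| + |mu|) + 8 * α * |a| + 8 * |c|) / K * x ^ (β - 1) := by
    rw [show x ^ (β - 1) = x ^ (β - 2) * x by rw [← rpow_add_one hx0.ne']; ring_nf,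
      div_mul_eq_mul_div, div_mul_eq_mul_div, div_le_div_iff₀ (by positivity) hK]
    have hxK : 16 * (|lam| + |q|) ≤ (8 * (|lam| + |mu|) + 8 * α * |a| + 8 * |c|) * (x * K) := by
      have hlm := mul_le_mul_of_nonneg_left hKx (by positivity : 0 ≤ 8 * (|lam| + |mu|))
      have ha := mul_le_mul_of_nonneg_left hαK (by positivity : 0 ≤ 8 * |a| * x)
      have hyK : 2 * y ≤ K * x := by nlinarith [mul_le_mul_of_nonneg_right hyx hK.le]
      have hc := mul_le_mul_of_nonneg_left hyK (by positivity : 0 ≤ 8 * |c|)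
      nlinarith
    have := mul_le_mul_of_nonneg_right hxK
      (mul_nonneg (rpow_nonneg hx0.le (β - 2)) hK.le)
    nlinarith
  have hcorrection : |β * (β - 1) / (2 * K) * ((lam + mu) * x ^ (β - 1))|
      ≤ (|lam| + |mu|) / K * x ^ (β - 1) := by
    have hcoef : |β * (β - 1) / (2 * K)| ≤ 1 / K := by
      rw [abs_div, abs_of_pos (by linarith : 0 < 2 * K), div_le_div_iff₀ (by linarith) hK,
        abs_mul, abs_of_nonneg hβ0, abs_of_nonpos (by linarith)]
      have : β * (1 - β) ≤ 1 := by nlinarith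
      nlinarith [mul_le_mul_of_nonneg_right this hK.le]
    rw [abs_mul, abs_mul, abs_of_nonneg (rpow_nonneg hx0.le _)]
    calc |β * (β - 1) / (2 * K)| * (|lam + mu| * x ^ (β - 1))
        ≤ 1 / K * ((|lam| + |mu|) * x ^ (β - 1)) :=
          mul_le_mul hcoef (mul_le_mul_of_nonneg_right (abs_add_le _ _) (rpow_nonneg hx0.le _))
            (by positivity) (one_div_pos.mpr hK).le
      _ = (|lam| + |mu|) / K * x ^ (β - 1) := by ring
  rw [hsplit]
  refine (abs_add_le _ _).trans ?_
  have hremainder :=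
    (abs_birth_death_expansion_le (p := lam) (q := q) hβ0 hβ1 hx0 hK hKx).trans hexpansion
  calc _ ≤ (8 * (|lam| + |mu|) + 8 * α * |a| + 8 * |c|) / K * x ^ (β - 1)
        + (|lam| + |mu|) / K * x ^ (β - 1) := add_le_add hremainder hcorrection
    _ = _ := by ring

lemma nrm2_le_abs_add_abs (u : ℝ × ℝ) : nrm2 u ≤ |u.1| + |u.2| := by
  rw [nrm2, sqrt_le_left (by positivity)]
  nlinarith [sq_abs u.1, sq_abs u.2, abs_nonneg u.1, abs_nonneg u.2]

lemma rpow_sub_one_le_mul_rpow_sub_one {β x n L : ℝ} (hβ0 : 0 ≤ β) (hβ1 : β ≤ 1)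
    (hn : 0 < n) (hL : 1 ≤ L) (hnx : n ≤ L * x) :
    x ^ (β - 1) ≤ L * n ^ (β - 1) := by
  have hL0 : 0 < L := one_pos.trans_le hL
  calc x ^ (β - 1) ≤ (n / L) ^ (β - 1) :=
        rpow_le_rpow_of_nonpos (by positivity) (by rwa [div_le_iff₀' hL0]) (by linarith)
    _ = L ^ (1 - β) * n ^ (β - 1) := by
        rw [div_rpow hn.le hL0.le, div_eq_mul_inv, ← rpow_neg hL0.le, neg_sub, mul_comm]
    _ ≤ L ^ (1 : ℝ) * n ^ (β - 1) := by gcongr; linarith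
    _ = L * n ^ (β - 1) := by rw [rpow_one]

lemma rpow_sub_one_le_of_mem_Dfrak {α β : ℝ} {u : ℝ × ℝ} (hα : 0 < α) (hβ0 : 0 ≤ β)
    (hβ1 : β ≤ 1) (hu : u ∈ Dfrak α) :
    u.1 ^ (β - 1) ≤ (1 + 1 / α) * nrm2 u ^ (β - 1)
      ∧ u.2 ^ (β - 1) ≤ (1 + 1 / α) * nrm2 u ^ (β - 1) := by
  obtain ⟨h1, h2, h21, h12⟩ := hu
  have hsum : nrm2 u ≤ u.1 + u.2 := by
    simpa [abs_of_pos (hα.trans h1), abs_of_pos (hα.trans h2)] using nrm2_le_abs_add_abs u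
  have hn : 0 < nrm2 u := sqrt_pos.mpr (by nlinarith)
  have hL : 1 ≤ 1 + 1 / α := by simp only [le_add_iff_nonneg_right]; positivity
  have hdiv : ∀ s t : ℝ, α * t ≤ s → t ≤ 1 / α * s := fun s t h => by
    rw [one_div_mul_eq_div, le_div_iff₀ hα]; linarith
  exact ⟨rpow_sub_one_le_mul_rpow_sub_one hβ0 hβ1 hn hL (by linarith [hdiv _ _ h21]),
    rpow_sub_one_le_mul_rpow_sub_one hβ0 hβ1 hn hL (by linarith [hdiv _ _ h12])⟩

theorem stmt11_general (lam₁ lam₂ mu₁ mu₂ a b c d : ℝ)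
    (α : ℝ) (hα : 0 < α) (β : ℝ) (hβ : β ∈ Set.Ioc (0 : ℝ) 1) (γ : ℝ) :
    ∃ C > 0, ∀ x ∈ Dfrak α, ∀ K : ℝ, 2 / α ≤ K →
      nrm2 (hKbd lam₁ lam₂ mu₁ mu₂ a b c d β γ K x
          - JFb lam₁ lam₂ mu₁ mu₂ a b c d β γ x - DeltaK a b c d β γ K x) ≤
        C / K * nrm2 x ^ (β - 1) := by
  obtain ⟨hβ0, hβ1⟩ := hβ
  set M₁ := 9 * (|lam₁| + |mu₁|) + 8 * α * |a| + 8 * |c|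
  set M₂ := 9 * (|lam₂| + |mu₂|) + 8 * α * |b| + 8 * |d|
  refine ⟨(1 + 1 / α) * (M₁ + |γ| * M₂) + 1, by positivity, fun x hx K hK => ?_⟩
  have hαK : 2 ≤ α * K := by rwa [div_le_iff₀ hα, mul_comm] at hK
  have hK0 : 0 < K := pos_of_mul_pos_right (by linarith) hα.le
  obtain ⟨h1, h2, h21, h12⟩ := hx
  obtain ⟨hx₁, hx₂⟩ := rpow_sub_one_le_of_mem_Dfrak hα hβ0.le hβ1 ⟨h1, h2, h21, h12⟩
  have hn : 0 ≤ nrm2 x ^ (β - 1) := rpow_nonneg (sqrt_nonneg _) _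
  rw [hKbd_sub_JFb_sub_DeltaK]
  calc _ ≤ |compensatorDefect lam₁ mu₁ a c β K x.1 x.2|
        + |γ| * |compensatorDefect lam₂ mu₂ b d β K x.2 x.1| := by
        rw [← abs_mul]; exact nrm2_le_abs_add_abs _
    _ ≤ M₁ / K * x.1 ^ (β - 1) + |γ| * (M₂ / K * x.2 ^ (β - 1)) := by
        gcongr
        · exact abs_compensatorDefect_le hβ0.le hβ1 hα h1 (hα.trans h2) h21 hαK
        · exact abs_compensatorDefect_le hβ0.le hβ1 hα h2 (hα.trans h1) h12 hαK
    _ ≤ M₁ / K * ((1 + 1 / α) * nrm2 x ^ (β - 1))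
        + |γ| * (M₂ / K * ((1 + 1 / α) * nrm2 x ^ (β - 1))) := by gcongr
    _ = (1 + 1 / α) * (M₁ + |γ| * M₂) / K * nrm2 x ^ (β - 1) := by ring
    _ ≤ _ := by gcongr; linarith

/-- First-order expansion of the compensator: uniform `(C/K)‖x‖^{β−1}` bound
on `𝔇_α` for `K ≥ 2/α`. -/
theorem stmt11 (lam₁ lam₂ mu₁ mu₂ a b c d : ℝ)
    (hlam₁ : 0 ≤ lam₁) (hlam₂ : 0 ≤ lam₂) (hmu₁ : 0 ≤ mu₁) (hmu₂ : 0 ≤ mu₂)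
    (ha : 0 ≤ a) (hb : 0 ≤ b) (hc : 0 ≤ c) (hd : 0 ≤ d)
    (α : ℝ) (hα : 0 < α) (β : ℝ) (hβ : β ∈ Set.Ioc (0 : ℝ) 1) (γ : ℝ) (hγ : 0 < γ) :
    ∃ C > 0, ∀ x ∈ Dfrak α, ∀ K : ℝ, 2 / α ≤ K →
      nrm2 (hKbd lam₁ lam₂ mu₁ mu₂ a b c d β γ K x
          - JFb lam₁ lam₂ mu₁ mu₂ a b c d β γ x - DeltaK a b c d β γ K x) ≤
        C / K * nrm2 x ^ (β - 1) :=
  stmt11_general lam₁ lam₂ mu₁ mu₂ a b c d α hα β hβ γ
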